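/- (Cycle Lemma) Let (F_v)_{v∈V(G)} be a representation of a restricted frame graph G. For every induced cycle C of G there is a vertex v of C such that F_v contains the frame F_u of every vertex u of C with u ∉ N[v]. Moreover, if u and v are two distinct vertices of C each having this property, then u and v are adjacent. -/

import Mathlib

/-! ## Frames and restricted frame graphs -/

/-- An axis-parallel box in `ℝ²`, i.e. a product `[x1,x2] × [y1,y2]` of two closed
nondegenerate intervals. -/
structure Box : Type where
  x1 : ℝ
  x2 : ℝ
  y1 : ℝ
  y2 : ℝ
  hx : x1 < x2
  hy : y1 < y2

namespace Box

/-- The region bounded by the frame of a box: the closed box itself. -/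
def region (B : Box) : Set (ℝ × ℝ) :=
  {p : ℝ × ℝ | B.x1 ≤ p.1 ∧ p.1 ≤ B.x2 ∧ B.y1 ≤ p.2 ∧ p.2 ≤ B.y2}

/-- The frame of a box: the topological boundary of the closed box. -/
def frame (B : Box) : Set (ℝ × ℝ) :=
  {p : ℝ × ℝ | p ∈ B.region ∧ (p.1 = B.x1 ∨ p.1 = B.x2 ∨ p.2 = B.y1 ∨ p.2 = B.y2)}

/-- The left side `{x1} × [y1,y2]` of a frame. -/
def leftSide (B : Box) : Set (ℝ × ℝ) :=
  {p : ℝ × ℝ | p.1 = B.x1 ∧ B.y1 ≤ p.2 ∧ p.2 ≤ B.y2}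

/-- The right side `{x2} × [y1,y2]` of a frame. -/
def rightSide (B : Box) : Set (ℝ × ℝ) :=
  {p : ℝ × ℝ | p.1 = B.x2 ∧ B.y1 ≤ p.2 ∧ p.2 ≤ B.y2}

/-- The top side `[x1,x2] × {y2}` of a frame. -/
def topSide (B : Box) : Set (ℝ × ℝ) :=
  {p : ℝ × ℝ | p.2 = B.y2 ∧ B.x1 ≤ p.1 ∧ p.1 ≤ B.x2}

/-- The bottom side `[x1,x2] × {y1}` of a frame. -/
def bottomSide (B : Box) : Set (ℝ × ℝ) :=
  {p : ℝ × ℝ | p.2 = B.y1 ∧ B.x1 ≤ p.1 ∧ p.1 ≤ B.x2}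

/-- The four corners of a frame. -/
def corners (B : Box) : Set (ℝ × ℝ) :=
  {(B.x1, B.y1), (B.x1, B.y2), (B.x2, B.y1), (B.x2, B.y2)}

/-- `Box.Inside inner outer` : the frame of `outer` contains the frame of `inner`,
i.e. the two frames are disjoint and the frame of `inner` is contained in the region
bounded by the frame of `outer`. -/
def Inside (inner outer : Box) : Prop :=
  inner.frame ∩ outer.frame = ∅ ∧ inner.frame ⊆ outer.region

/-- `Box.Outside B outer` : the frames are disjoint and `B` is not inside `outer`. -/
def Outside (B outer : Box) : Prop :=
  B.frame ∩ outer.frame = ∅ ∧ ¬ Inside B outer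

end Box

/-- A family of frames `(F v)` is a representation of the graph `G` as a restricted
frame graph: distinct vertices are adjacent iff their frames intersect, and the four
restrictions on the representation hold. -/
structure IsFrameRepresentation {V : Type} (G : SimpleGraph V) (F : V → Box) : Prop where
  /-- Distinct vertices are adjacent iff their frames intersect. -/
  adj_iff : ∀ u v : V, u ≠ v → (G.Adj u v ↔ ((F u).frame ∩ (F v).frame).Nonempty)
  /-- (1) Corners of a frame do not coincide with any point of another frame. -/
  corner_free : ∀ u v : V, u ≠ v → (F u).corners ∩ (F v).frame = ∅
  /-- (2) The left side of a frame does not intersect any other frame. -/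
  left_free : ∀ u v : V, u ≠ v → (F u).leftSide ∩ (F v).frame = ∅
  /-- (3) If the right side of a frame intersects a second frame, this right side
  intersects both the top and the bottom side of that second frame. -/
  right_cross : ∀ u v : V, u ≠ v →
    ((F u).rightSide ∩ (F v).frame).Nonempty →
    ((F u).rightSide ∩ (F v).topSide).Nonempty ∧
      ((F u).rightSide ∩ (F v).bottomSide).Nonempty
  /-- (4) If two frames intersect, no third frame is entirely contained in the
  intersection of the regions bounded by the two frames. -/
  not_nested : ∀ u v w : V, u ≠ v → w ≠ u → w ≠ v →
    ((F u).frame ∩ (F v).frame).Nonempty →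
    ¬ ((F w).frame ⊆ (F u).region ∩ (F v).region)

/-- A graph is a restricted frame graph if it admits a frame representation. -/
def IsRestrictedFrameGraph {V : Type} (G : SimpleGraph V) : Prop :=
  ∃ F : V → Box, IsFrameRepresentation G F

/-! ## Basic graph notions -/

/-- The closed neighborhood `N[u] = {u} ∪ N(u)`. -/
def closedNbhd {V : Type} (G : SimpleGraph V) (u : V) : Set V :=
  insert u (G.neighborSet u)

/-- `G` has a full star-cutset: for some vertex `u` the removal of `N[u]`
disconnects `G`. -/
def HasFullStarCutset {V : Type} (G : SimpleGraph V) : Prop :=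
  ∃ u : V, ¬ (G.induce ((closedNbhd G u)ᶜ)).Preconnected

/-- `v` is a cut-vertex of `G`: its removal disconnects `G`. -/
def IsCutVertex {V : Type} (G : SimpleGraph V) (v : V) : Prop :=
  ¬ (G.induce {u : V | u ≠ v}).Preconnected

/-- `G` is a path graph: its vertices can be enumerated `0, …, n-1` so that two
vertices are adjacent iff they are consecutive. -/
def IsPathGraph {V : Type} (G : SimpleGraph V) : Prop :=
  ∃ (n : ℕ) (e : V ≃ Fin n), ∀ u v : V,
    G.Adj u v ↔ ((e u : ℕ) + 1 = (e v : ℕ) ∨ (e v : ℕ) + 1 = (e u : ℕ))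

/-- `G` is a cycle graph (on at least 3 vertices). -/
def IsCycleGraphOn {V : Type} (G : SimpleGraph V) : Prop :=
  ∃ n : ℕ, 3 ≤ n ∧ ∃ e : V ≃ Fin n, ∀ u v : V,
    G.Adj u v ↔ (((e u : ℕ) + 1) % n = (e v : ℕ) ∨ ((e v : ℕ) + 1) % n = (e u : ℕ))

/-- `x` is a leaf of `T`: it has exactly one neighbor. -/
def IsLeaf {V : Type} (T : SimpleGraph V) (x : V) : Prop :=
  (T.neighborSet x).ncard = 1

/-- `G` is a chandelier with pivot `v`: `G - v` is a tree `T` and `v` is adjacent to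
exactly the leaves of `T`. -/
def IsChandelierWithPivot {V : Type} (G : SimpleGraph V) (v : V) : Prop :=
  (G.induce {u : V | u ≠ v}).IsTree ∧
    ∀ u : ↥{u : V | u ≠ v}, (G.Adj v u.val ↔ IsLeaf (G.induce {u : V | u ≠ v}) u)

/-- `G` is a chandelier. -/
def IsChandelier {V : Type} (G : SimpleGraph V) : Prop :=
  ∃ v : V, IsChandelierWithPivot G v

/-- `G` is a luxury chandelier: a chandelier (with pivot `v` and tree `T = G - v`)
such that the neighbor in `T` of each leaf of `T` has degree 2 in `T`. -/
def IsLuxuryChandelier {V : Type} (G : SimpleGraph V) : Prop :=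
  ∃ v : V, IsChandelierWithPivot G v ∧
    ∀ x y : ↥{u : V | u ≠ v}, (G.induce {u : V | u ≠ v}).Adj x y →
      IsLeaf (G.induce {u : V | u ≠ v}) x →
      ((G.induce {u : V | u ≠ v}).neighborSet y).ncard = 2

/-! ## Multigraphs and subdivisions -/

/-- A loopless multigraph on vertex set `V`: a symmetric multiplicity function. -/
structure Multigraph (V : Type) where
  m : V → V → ℕ
  symm : ∀ u v : V, m u v = m v u
  loopless : ∀ v : V, m v v = 0

/-- The multigraph associated with a simple graph (each edge has multiplicity 1). -/
noncomputable def SimpleGraph.toMultigraph {V : Type} (G : SimpleGraph V) : Multigraph V where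
  m u v := @ite ℕ (G.Adj u v) (Classical.dec _) 1 0
  symm u v := by
    beta_reduce
    by_cases h : G.Adj u v
    · rw [if_pos h, if_pos (G.adj_symm h)]
    · rw [if_neg h, if_neg (fun h' => h (G.adj_symm h'))]
  loopless v := by
    beta_reduce
    rw [if_neg G.irrefl]

/-- The interior (set of internal vertices) of a walk. -/
def walkInterior {V : Type} {G : SimpleGraph V} {a b : V} (p : G.Walk a b) : Set V :=
  {w : V | w ∈ p.support ∧ w ≠ a ∧ w ≠ b}

/-- A witness that the simple graph `H` is a `≥k`-subdivision of the multigraph `G`: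
each edge of `G` (counted with multiplicity) is replaced by a path with at least
`k+1` edges between (the images of) its endpoints, these paths being internally
disjoint from each other and from the branch vertices, and covering all of `H`. -/
structure MultiSubdivision {V W : Type} (G : Multigraph V) (H : SimpleGraph W) (k : ℕ) where
  /-- the embedding of branch vertices -/
  f : V ↪ W
  /-- the path replacing the `i`-th parallel edge between `u` and `v` -/
  path : ∀ u v : V, Fin (G.m u v) → H.Walk (f u) (f v)
  path_symm : ∀ (u v : V) (i : Fin (G.m u v)),
    path v u (Fin.cast (G.symm u v) i) = (path u v i).reverse
  path_ne : ∀ (u v : V) (i i' : Fin (G.m u v)), (i : ℕ) ≠ (i' : ℕ) →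
    path u v i ≠ path u v i'
  isPath : ∀ (u v : V) (i : Fin (G.m u v)), (path u v i).IsPath
  length_le : ∀ (u v : V) (i : Fin (G.m u v)), k + 1 ≤ (path u v i).length
  /-- the paths are internally disjoint from the branch vertices -/
  interior_avoid : ∀ (u v : V) (i : Fin (G.m u v)) (x : V),
    f x ∉ walkInterior (path u v i)
  /-- distinct paths are pairwise internally disjoint -/
  interior_disjoint : ∀ (u v : V) (i : Fin (G.m u v)) (u' v' : V) (i' : Fin (G.m u' v')),
    (walkInterior (path u v i) ∩ walkInterior (path u' v' i')).Nonempty →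
    (u = u' ∧ v = v' ∧ (i : ℕ) = (i' : ℕ)) ∨ (u = v' ∧ v = u' ∧ (i : ℕ) = (i' : ℕ))
  /-- every vertex of `H` is a branch vertex or an internal vertex of a path -/
  vertex_cover : ∀ w : W, (∃ x : V, f x = w) ∨
    ∃ (u v : V) (i : Fin (G.m u v)), w ∈ walkInterior (path u v i)
  /-- every edge of `H` lies on one of the paths -/
  edge_cover : ∀ e ∈ H.edgeSet, ∃ (u v : V) (i : Fin (G.m u v)), e ∈ (path u v i).edges

/-- `H` is a `≥k`-subdivision of the multigraph `G`. -/
def IsSubdivisionGE {V W : Type} (G : Multigraph V) (k : ℕ) (H : SimpleGraph W) : Prop :=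
  Nonempty (MultiSubdivision G H k)

/-- `H` is a subdivision of the simple graph `G` (every edge is replaced by a path
with at least one edge). -/
def IsSubdivision {V W : Type} (G : SimpleGraph V) (H : SimpleGraph W) : Prop :=
  IsSubdivisionGE G.toMultigraph 0 H

namespace Multigraph

/-- The underlying simple graph of a multigraph. -/
def support {V : Type} (G : Multigraph V) : SimpleGraph V where
  Adj u v := 0 < G.m u v
  symm := by
    constructor
    intro u v h
    rw [G.symm v u]
    exact h
  loopless := by
    constructor
    intro v h
    rw [G.loopless v] at h
    exact Nat.lt_irrefl 0 h

/-- A multigraph is connected if its underlying simple graph is. -/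
def Connected {V : Type} (G : Multigraph V) : Prop :=
  G.support.Connected

/-- A multigraph is 2-connected if it is connected, has at least two vertices, and
deleting any single vertex leaves it connected. -/
def TwoConnected {V : Type} (G : Multigraph V) : Prop :=
  G.support.Connected ∧ (∃ u v : V, u ≠ v) ∧
    ∀ v : V, (G.support.induce {u : V | u ≠ v}).Connected

/-- `v` is a feedback vertex of the multigraph `G`: `G - v` contains no cycle
(where a pair of parallel edges forms a cycle of length 2). -/
def IsFeedbackVertex {V : Type} (G : Multigraph V) (v : V) : Prop :=
  (G.support.induce {u : V | u ≠ v}).IsAcyclic ∧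
    ∀ u w : V, u ≠ v → w ≠ v → G.m u w ≤ 1

end Multigraph

/-! ## Induced cycles and big vertices -/

/-- `C` induces a cycle in `G`. -/
def IsInducedCycle {V : Type} (G : SimpleGraph V) (C : Set V) : Prop :=
  IsCycleGraphOn (G.induce C)

/-- `v` is a big vertex of the (induced cycle on) `C` with respect to the frame
representation `F`: `v ∈ C` and `F v` contains the frame of every vertex of `C`
outside `N[v]`. -/
def IsBigVertexOf {V : Type} (G : SimpleGraph V) (F : V → Box) (C : Set V) (v : V) : Prop :=
  v ∈ C ∧ ∀ u ∈ C, u ≠ v → ¬ G.Adj v u → Box.Inside (F u) (F v)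

/-- `v` is a big vertex of the representation `F`: it is a big vertex of some
induced cycle of `G`. -/
def IsBigVertex {V : Type} (G : SimpleGraph V) (F : V → Box) (v : V) : Prop :=
  ∃ C : Set V, IsInducedCycle G C ∧ IsBigVertexOf G F C v

/-! ## Gluing a chandelier onto a vertex -/

/-- The graph obtained from the disjoint union of `G₁` and `G₂` by identifying the
vertex `v` of `G₁` with the vertex `p` of `G₂`. -/
def glueAt {V₁ V₂ : Type} (G₁ : SimpleGraph V₁) (G₂ : SimpleGraph V₂) (v : V₁) (p : V₂) :
    SimpleGraph (V₁ ⊕ {x : V₂ // x ≠ p}) :=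
  SimpleGraph.fromRel (fun a b =>
    match a, b with
    | Sum.inl u, Sum.inl w => G₁.Adj u w
    | Sum.inr u, Sum.inr w => G₂.Adj u.val w.val
    | Sum.inl u, Sum.inr w => u = v ∧ G₂.Adj p w.val
    | Sum.inr _, Sum.inl _ => False)

/-! ## The multigraphs `Ĥ₁` and `Ĥ₂` -/

/-- The multiplicity matrix of `Ĥ₁` (vertices `a₁ = 0`, `b₁ = 1`, `v₁ = 2`, `v₂ = 3`,
`a₂ = 4`, `b₂ = 5`). -/
def H1hatMatrix : Matrix (Fin 6) (Fin 6) ℕ :=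
  !![0, 2, 1, 0, 0, 0;
     2, 0, 1, 0, 0, 0;
     1, 1, 0, 1, 0, 0;
     0, 0, 1, 0, 1, 1;
     0, 0, 0, 1, 0, 2;
     0, 0, 0, 1, 2, 0]

/-- The multigraph `Ĥ₁`: two disjoint digons `a₁b₁`, `a₂b₂`, and single edges
`a₁v₁`, `b₁v₁`, `v₁v₂`, `a₂v₂`, `b₂v₂`. -/
def H1hat : Multigraph (Fin 6) where
  m u v := H1hatMatrix u v
  symm := by intro u v; fin_cases u <;> fin_cases v <;> rfl
  loopless := by decide

/-- The multiplicity matrix of `Ĥ₂` (vertices `a₁ = 0`, `b₁ = 1`, `v = 2`,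
`a₂ = 3`, `b₂ = 4`). -/
def H2hatMatrix : Matrix (Fin 5) (Fin 5) ℕ :=
  !![0, 2, 1, 0, 0;
     2, 0, 1, 0, 0;
     1, 1, 0, 1, 1;
     0, 0, 1, 0, 2;
     0, 0, 1, 2, 0]

/-- The multigraph `Ĥ₂`: two digons `a₁b₁`, `a₂b₂`, and single edges
`a₁v`, `b₁v`, `a₂v`, `b₂v`. -/
def H2hat : Multigraph (Fin 5) where
  m u v := H2hatMatrix u v
  symm := by intro u v; fin_cases u <;> fin_cases v <;> rfl
  loopless := by decide

/-! ## Subdivisions of `K₄` and their type -/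

/-- The complete graph on four vertices. -/
def K4 : SimpleGraph (Fin 4) := ⊤

/-- The set of edges of `K₄` that are subdivided at least once in the subdivision
witnessed by `S` (i.e. replaced by a path with at least two edges). -/
def subdividedEdges {W : Type} {H : SimpleGraph W}
    (S : MultiSubdivision K4.toMultigraph H 0) : Set (Sym2 (Fin 4)) :=
  {e : Sym2 (Fin 4) | ∃ (u v : Fin 4) (i : Fin (K4.toMultigraph.m u v)),
    e = s(u, v) ∧ 2 ≤ (S.path u v i).length}

/-! ## Adding a twin -/

/-- The graph obtained from `G` by adding a twin of `v`: a new vertex, non-adjacent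
to `v`, whose neighborhood is exactly `N(v)`. -/
def addTwin {V : Type} (G : SimpleGraph V) (v : V) : SimpleGraph (V ⊕ Unit) :=
  SimpleGraph.fromRel (fun a b =>
    match a, b with
    | Sum.inl u, Sum.inl w => G.Adj u w
    | Sum.inr _, Sum.inl u => G.Adj v u
    | _, _ => False)

/-! ## The construction of Burling and Pawlik et al. -/

/-- A graph-stable set pair: a graph together with a collection of sets of vertices
(intended: stable sets). -/
structure GSPair : Type 1 where
  V : Type
  G : SimpleGraph V
  S : Set (Set V)

namespace GSPair

/-- The vertex type of `next P`: the original vertices, the vertices `(s, u)` of the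
copy `H_s` of the graph for each `s ∈ 𝒮`, and the new vertices `v_{s,t}`. -/
abbrev nextVertex (P : GSPair) : Type :=
  P.V ⊕ ((↥P.S × P.V) ⊕ (↥P.S × ↥P.S))

/-- The adjacency generator for the graph of `next P`. -/
def nextRel (P : GSPair) : P.nextVertex → P.nextVertex → Prop
  | Sum.inl u, Sum.inl v => P.G.Adj u v
  | Sum.inr (Sum.inl (s, u)), Sum.inr (Sum.inl (t, v)) => s = t ∧ P.G.Adj u v
  | Sum.inr (Sum.inr (s, t)), Sum.inr (Sum.inl (s', v)) => s = s' ∧ v ∈ (t : Set P.V)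
  | _, _ => False

/-- The procedure `next`: add a disjoint copy `H_s` of the graph for each `s ∈ 𝒮`, a
vertex `v_{s,t}` whose neighborhood is exactly the copy of `t` inside `H_s` for all
`s, t ∈ 𝒮`, and take as new collection of stable sets all `s ∪ t_s` and
`s ∪ {v_{s,t}}`. -/
def next (P : GSPair) : GSPair where
  V := P.nextVertex
  G := SimpleGraph.fromRel P.nextRel
  S := {A : Set P.nextVertex | ∃ s t : ↥P.S,
    A = (Sum.inl '' (s : Set P.V) : Set P.nextVertex) ∪
        ((fun u : P.V => (Sum.inr (Sum.inl (s, u)) : P.nextVertex)) '' (t : Set P.V)) ∨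
    A = (Sum.inl '' (s : Set P.V) : Set P.nextVertex) ∪ {Sum.inr (Sum.inr (s, t))}}

/-- The starting pair: a single vertex, with the single stable set consisting of
that vertex. -/
def base : GSPair := ⟨PUnit, ⊥, {Set.univ}⟩

/-- `P` is an induced subgraph-stable set pair of `Q`. -/
def IsInducedSubpair (P Q : GSPair) : Prop :=
  ∃ f : P.V ↪ Q.V, (∀ u v : P.V, P.G.Adj u v ↔ Q.G.Adj (f u) (f v)) ∧
    ∀ A ∈ P.S, ∃ B ∈ Q.S, A = f ⁻¹' B

/-- A graph-stable set pair is constructible if it is an induced subgraph-stable set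
pair of some iterate of `next` on the starting pair. -/
def Constructible (P : GSPair) : Prop :=
  ∃ i : ℕ, IsInducedSubpair P (next^[i] base)

end GSPair


/-!
Whenever two frames of the representation meet, restrictions (1)–(3) force the right side of one
of them to cut vertically through the other, which then has the higher bottom edge. Hence the
vertex `b` of the cycle whose frame has the highest bottom edge is cut through by the frames of
both its neighbours `a` and `a'`; these do not meet, so one of them, say `F a`, lies inside the
other. Walking along the cycle from `a` away from `b`, each frame meets the previous one, which
lies inside `F a'`, but not `F a'` itself; by connectedness of frames it lies inside `F a'` too,
so `a'` is a big vertex. Two non-adjacent big vertices would have frames inside each other.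
-/

namespace Box

/-- The right side of `B` cuts through `C`, from its bottom side to its top side. -/
def Crosses (B C : Box) : Prop :=
  B.x1 < C.x1 ∧ C.x1 < B.x2 ∧ B.x2 < C.x2 ∧ B.y1 < C.y1 ∧ C.y2 < B.y2

def openRegion (B : Box) : Set (ℝ × ℝ) :=
  Set.Ioo B.x1 B.x2 ×ˢ Set.Ioo B.y1 B.y2

lemma crosses_of_rightSide_meets {B C : Box} (hBC : B.corners ∩ C.frame = ∅)
    (hCB : C.corners ∩ B.frame = ∅) (hleft : B.leftSide ∩ C.frame = ∅)
    (htop : (B.rightSide ∩ C.topSide).Nonempty)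
    (hbot : (B.rightSide ∩ C.bottomSide).Nonempty) : Crosses B C := by
  obtain ⟨⟨_, _⟩, ⟨rfl, hB⟩, rfl, hC⟩ := htop
  obtain ⟨⟨_, _⟩, ⟨-, hB'⟩, rfl, -⟩ := hbot
  -- An inequality of `Crosses` can only fail by putting one of these points on both frames.
  have h1 := Set.eq_empty_iff_forall_notMem.mp hBC (B.x2, B.y2)
  have h2 := Set.eq_empty_iff_forall_notMem.mp hBC (B.x2, B.y1)
  have h3 := Set.eq_empty_iff_forall_notMem.mp hCB (C.x1, C.y2)
  have h4 := Set.eq_empty_iff_forall_notMem.mp hCB (C.x2, C.y2)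
  have h5 := Set.eq_empty_iff_forall_notMem.mp hleft (B.x1, C.y2)
  have := B.hx; have := B.hy; have := C.hx; have := C.hy
  simp [corners, frame, region, leftSide] at h1 h2 h3 h4 h5
  unfold Crosses
  grind

lemma frame_subset_openRegion_of_crosses {A A' W : Box} (hA : Crosses A W) (hA' : Crosses A' W)
    (hAA' : A.frame ∩ A'.frame = ∅) :
    A.frame ⊆ A'.openRegion ∨ A'.frame ⊆ A.openRegion := by
  wlog hy : A'.y1 < A.y1 generalizing A A'
  · rcases (not_lt.mp hy).lt_or_eq with hy | hy
    · exact (this hA' hA (Set.inter_comm _ _ ▸ hAA') hy).symm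
    · have h := Set.eq_empty_iff_forall_notMem.mp hAA' (W.x1, A.y1)
      unfold Crosses at hA hA'
      have := A.hy; have := A'.hy; have := W.hy
      simp [frame, region] at h
      grind
  -- `A'` reaches lower, so it is the outer frame: otherwise one of these points is on both.
  have h1 := Set.eq_empty_iff_forall_notMem.mp hAA' (A'.x1, A.y1)
  have h2 := Set.eq_empty_iff_forall_notMem.mp hAA' (A'.x2, A.y1)
  have h3 := Set.eq_empty_iff_forall_notMem.mp hAA' (W.x1, A.y2)
  have h4 := Set.eq_empty_iff_forall_notMem.mp hAA' (A.x1, A'.y2)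
  unfold Crosses at hA hA'
  have := A.hx; have := A.hy; have := A'.hx; have := A'.hy; have := W.hy
  simp [frame, region] at h1 h2 h3 h4
  have hx1 : A'.x1 < A.x1 := by grind
  have hx2 : A.x2 < A'.x2 := by grind
  have hy2 : A.y2 < A'.y2 := by grind
  left
  rintro p ⟨⟨hpx1, hpx2, hpy1, hpy2⟩, -⟩
  exact ⟨⟨by linarith, by linarith⟩, by linarith, by linarith⟩

lemma Inside.asymm {A B : Box} (hAB : Inside A B) : ¬ Inside B A := by
  rintro ⟨-, hBA⟩
  have hA : (A.x1, A.y1) ∈ A.frame := ⟨⟨le_rfl, A.hx.le, le_rfl, A.hy.le⟩, .inl rfl⟩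
  have hB : (B.x1, B.y1) ∈ B.frame := ⟨⟨le_rfl, B.hx.le, le_rfl, B.hy.le⟩, .inl rfl⟩
  have hAinB := hAB.2 hA
  exact hAB.1.subset ⟨hA, hAinB, .inl (le_antisymm (hBA hB).1 hAinB.1)⟩

lemma openRegion_subset_region (B : Box) : B.openRegion ⊆ B.region :=
  fun _ ⟨⟨h1, h2⟩, h3, h4⟩ => ⟨h1.le, h2.le, h3.le, h4.le⟩

lemma region_subset_openRegion_union_frame (B : Box) : B.region ⊆ B.openRegion ∪ B.frame := by
  rintro p ⟨h1, h2, h3, h4⟩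
  by_cases h : p.1 = B.x1 ∨ p.1 = B.x2 ∨ p.2 = B.y1 ∨ p.2 = B.y2
  · exact .inr ⟨⟨h1, h2, h3, h4⟩, h⟩
  · simp only [not_or] at h
    exact .inl ⟨⟨h1.lt_of_ne' h.1, h2.lt_of_ne h.2.1⟩,
      h3.lt_of_ne' h.2.2.1, h4.lt_of_ne h.2.2.2⟩

lemma isOpen_openRegion (B : Box) : IsOpen B.openRegion :=
  isOpen_Ioo.prod isOpen_Ioo

lemma isClosed_region (B : Box) : IsClosed B.region := by
  have : B.region = Set.Icc B.x1 B.x2 ×ˢ Set.Icc B.y1 B.y2 := by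
    ext p
    simp only [region, Set.mem_prod, Set.mem_Icc, Set.mem_ofPred_eq, and_assoc]
  exact this ▸ isClosed_Icc.prod isClosed_Icc

lemma frame_eq_sides (B : Box) :
    B.frame = (B.leftSide ∪ B.bottomSide) ∪ (B.rightSide ∪ B.topSide) := by
  have := B.hx; have := B.hy
  ext ⟨x, y⟩
  simp only [frame, region, leftSide, bottomSide, rightSide, topSide, Set.mem_union,
    Set.mem_ofPred_eq]
  grind

lemma isPreconnected_frame (B : Box) : IsPreconnected B.frame := by
  have hx := B.hx.le; have hy := B.hy.le
  have vertical (x : ℝ) :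
      IsPreconnected {p : ℝ × ℝ | p.1 = x ∧ B.y1 ≤ p.2 ∧ p.2 ≤ B.y2} := by
    have : {p : ℝ × ℝ | p.1 = x ∧ B.y1 ≤ p.2 ∧ p.2 ≤ B.y2} = {x} ×ˢ Set.Icc B.y1 B.y2 :=
      Set.ext fun _ => by simp
    exact this ▸ isPreconnected_singleton.prod isPreconnected_Icc
  have horizontal (y : ℝ) :
      IsPreconnected {p : ℝ × ℝ | p.2 = y ∧ B.x1 ≤ p.1 ∧ p.1 ≤ B.x2} := by
    have : {p : ℝ × ℝ | p.2 = y ∧ B.x1 ≤ p.1 ∧ p.1 ≤ B.x2} = Set.Icc B.x1 B.x2 ×ˢ {y} :=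
      Set.ext fun _ => by simp [and_comm]
    exact this ▸ isPreconnected_Icc.prod isPreconnected_singleton
  rw [frame_eq_sides]
  refine .union (B.x2, B.y1) (.inr ⟨rfl, hx, le_rfl⟩) (.inl ⟨rfl, le_rfl, hy⟩)
    (.union (B.x1, B.y1) ⟨rfl, le_rfl, hy⟩ ⟨rfl, le_rfl, hx⟩ (vertical _) (horizontal _))
    (.union (B.x2, B.y2) ⟨rfl, hy, le_rfl⟩ ⟨rfl, hx, le_rfl⟩ (vertical _) (horizontal _))

lemma frame_subset_openRegion {B W : Box} (hBW : B.frame ∩ W.frame = ∅)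
    (hmeet : (B.frame ∩ W.openRegion).Nonempty) : B.frame ⊆ W.openRegion := by
  have hcover : B.frame ⊆ W.openRegion ∪ W.regionᶜ := fun p hp => by
    by_cases hpW : p ∈ W.region
    · exact (W.region_subset_openRegion_union_frame hpW).imp_right
        fun hpW' => (hBW.subset ⟨hp, hpW'⟩).elim
    · exact .inr hpW
  exact B.isPreconnected_frame.subset_left_of_subset_union W.isOpen_openRegion
    W.isClosed_region.isOpen_compl
    (Set.disjoint_compl_right_iff_subset.mpr W.openRegion_subset_region) hcover hmeet

end Box

namespace IsFrameRepresentation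

variable {V : Type} {G : SimpleGraph V} {F : V → Box}

lemma frame_inter_frame_eq_empty (hF : IsFrameRepresentation G F) {u v : V} (hne : u ≠ v)
    (huv : ¬ G.Adj u v) : (F u).frame ∩ (F v).frame = ∅ :=
  Set.not_nonempty_iff_eq_empty.mp fun h => huv ((hF.adj_iff u v hne).mpr h)

lemma crosses_or_crosses (hF : IsFrameRepresentation G F) {u v : V} (huv : G.Adj u v) :
    (F u).Crosses (F v) ∨ (F v).Crosses (F u) := by
  have hne := huv.ne
  have hBC := hF.corner_free u v hne
  have hCB := hF.corner_free v u hne.symm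
  obtain ⟨⟨x, y⟩, hpB, hpC⟩ := (hF.adj_iff u v hne).mp huv
  by_cases hxB : x = (F u).x2
  · obtain ⟨htop, hbot⟩ := hF.right_cross u v hne ⟨_, ⟨hxB, hpB.1.2.2⟩, hpC⟩
    exact .inl (Box.crosses_of_rightSide_meets hBC hCB (hF.left_free u v hne) htop hbot)
  by_cases hxC : x = (F v).x2
  · obtain ⟨htop, hbot⟩ := hF.right_cross v u hne.symm ⟨_, ⟨hxC, hpC.1.2.2⟩, hpB⟩
    exact .inr (Box.crosses_of_rightSide_meets hCB hBC (hF.left_free v u hne.symm) htop hbot)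
  -- The common point lies on horizontal sides of both frames, so the left corner of one of
  -- them on that line lies on the other frame.
  exfalso
  have h1 := Set.eq_empty_iff_forall_notMem.mp (hF.left_free u v hne) (x, y)
  have h2 := Set.eq_empty_iff_forall_notMem.mp (hF.left_free v u hne.symm) (x, y)
  have h3 := Set.eq_empty_iff_forall_notMem.mp hBC ((F u).x1, y)
  have h4 := Set.eq_empty_iff_forall_notMem.mp hCB ((F v).x1, y)
  have := (F u).hy; have := (F v).hy
  simp [Box.corners, Box.frame, Box.region, Box.leftSide] at h1 h2 h3 h4 hpB hpC
  grind

lemma crosses_of_adj_of_y1_le (hF : IsFrameRepresentation G F) {u v : V} (huv : G.Adj u v)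
    (hy : (F u).y1 ≤ (F v).y1) : (F u).Crosses (F v) :=
  (hF.crosses_or_crosses huv).resolve_right fun h => h.2.2.2.1.not_ge hy

lemma frame_subset_openRegion_of_adj (hF : IsFrameRepresentation G F) {w x y : V}
    (hxy : G.Adj x y) (hwy : w ≠ y) (hw : ¬ G.Adj w y)
    (hx : (F x).frame ⊆ (F w).openRegion) : (F y).frame ⊆ (F w).openRegion := by
  obtain ⟨p, hpx, hpy⟩ := (hF.adj_iff x y hxy.ne).mp hxy
  exact Box.frame_subset_openRegion (Set.inter_comm _ _ ▸ hF.frame_inter_frame_eq_empty hwy hw)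
    ⟨p, hpy, hx hpx⟩

end IsFrameRepresentation

lemma notMem_closedNbhd_iff {V : Type} {G : SimpleGraph V} {u v : V} :
    v ∉ closedNbhd G u ↔ v ≠ u ∧ ¬ G.Adj u v := by
  simp [closedNbhd]

structure IsCycleEnumeration {V : Type} (G : SimpleGraph V) (C : Set V) {n : ℕ} [NeZero n]
    (c : Fin n → V) : Prop where
  injective : Function.Injective c
  range_eq : Set.range c = C
  adj_iff : ∀ i j, G.Adj (c i) (c j) ↔ j = i + 1 ∨ i = j + 1

namespace IsCycleEnumeration

variable {V : Type} {G : SimpleGraph V} {C : Set V} {n : ℕ} [NeZero n] {c : Fin n → V}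

lemma of_equiv (e : C ≃ Fin n)
    (he : ∀ u v : C, (G.induce C).Adj u v ↔
      (((e u : ℕ) + 1) % n = (e v : ℕ) ∨ ((e v : ℕ) + 1) % n = (e u : ℕ))) :
    IsCycleEnumeration G C (fun i => (e.symm i : V)) where
  injective := Subtype.val_injective.comp e.symm.injective
  range_eq := by
    ext v
    exact ⟨fun ⟨i, hi⟩ => hi ▸ (e.symm i).2, fun hv => ⟨e ⟨v, hv⟩, by simp⟩⟩
  adj_iff i j := by
    have := he (e.symm i) (e.symm j)
    simp only [Equiv.apply_symm_apply] at this
    simp only [Fin.ext_iff, Fin.val_add, Fin.val_one', Nat.add_mod_mod]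
    exact this.trans (or_congr eq_comm eq_comm)

lemma add_left (hc : IsCycleEnumeration G C c) (s : Fin n) :
    IsCycleEnumeration G C (fun i => c (s + i)) where
  injective := hc.injective.comp (Equiv.addLeft s).injective
  range_eq := (Equiv.addLeft s).surjective.range_comp c ▸ hc.range_eq
  adj_iff i j := by rw [hc.adj_iff]; grind

lemma sub_left (hc : IsCycleEnumeration G C c) (s : Fin n) :
    IsCycleEnumeration G C (fun i => c (s - i)) where
  injective := hc.injective.comp (Equiv.subLeft s).injective
  range_eq := (Equiv.subLeft s).surjective.range_comp c ▸ hc.range_eq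
  adj_iff i j := by rw [hc.adj_iff]; grind

lemma notMem_closedNbhd_zero_iff (hc : IsCycleEnumeration G C c) (i : Fin n) :
    c i ∉ closedNbhd G (c 0) ↔ 2 ≤ (i : ℕ) ∧ (i : ℕ) + 2 ≤ n := by
  have hi := i.isLt
  simp only [closedNbhd, Set.mem_insert_iff, SimpleGraph.mem_neighborSet, hc.injective.eq_iff,
    hc.adj_iff, zero_add, Fin.ext_iff, Fin.val_add, Fin.val_one', Fin.val_zero, Nat.add_mod_mod]
  rcases eq_or_ne n 1 with rfl | hn
  · omega
  rw [Nat.one_mod_eq_one.mpr hn]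
  rcases (show (i : ℕ) + 1 < n ∨ (i : ℕ) + 1 = n by omega) with hlt | heq
  · rw [Nat.mod_eq_of_lt hlt]; omega
  · rw [heq, Nat.mod_self]; omega

variable {F : V → Box}

lemma isBigVertexOf_zero_of_forall (hc : IsCycleEnumeration G C c)
    (hF : IsFrameRepresentation G F)
    (h : ∀ i : Fin n, 2 ≤ (i : ℕ) → (i : ℕ) + 2 ≤ n →
      (F (c i)).frame ⊆ (F (c 0)).openRegion) :
    IsBigVertexOf G F C (c 0) := by
  refine ⟨hc.range_eq ▸ ⟨0, rfl⟩, fun u hu hne hnadj => ?_⟩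
  obtain ⟨i, rfl⟩ := hc.range_eq ▸ hu
  obtain ⟨hi, hin⟩ :=
    (hc.notMem_closedNbhd_zero_iff i).mp (notMem_closedNbhd_iff.mpr ⟨hne, hnadj⟩)
  exact ⟨hF.frame_inter_frame_eq_empty hne fun h => hnadj h.symm,
    (h i hi hin).trans (Box.openRegion_subset_region _)⟩

open Fin.NatCast in
lemma isBigVertexOf_zero (hc : IsCycleEnumeration G C c) (hF : IsFrameRepresentation G F)
    (h2 : (F (c 2)).frame ⊆ (F (c 0)).openRegion) : IsBigVertexOf G F C (c 0) := by
  refine hc.isBigVertexOf_zero_of_forall hF fun i hi hin => ?_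
  rw [← Fin.cast_val_eq_self i]
  generalize (i : ℕ) = k at hi hin
  induction k, hi using Nat.le_induction with
  | base => exact_mod_cast h2
  | succ k hk ih =>
    have hk' : c ((k + 1 : ℕ) : Fin n) ∉ closedNbhd G (c 0) :=
      (hc.notMem_closedNbhd_zero_iff _).mpr
        (by rw [Fin.val_natCast, Nat.mod_eq_of_lt (by omega)]; omega)
    rw [notMem_closedNbhd_iff] at hk'
    exact hF.frame_subset_openRegion_of_adj ((hc.adj_iff _ _).mpr (.inl (Nat.cast_succ k)))
      hk'.1.symm hk'.2 (ih (by omega))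

lemma exists_isBigVertexOf (hc : IsCycleEnumeration G C c) (hF : IsFrameRepresentation G F)
    (hn : 3 ≤ n) : ∃ v, IsBigVertexOf G F C v := by
  obtain rfl | hn := hn.eq_or_lt
  · exact ⟨c 0, hc.isBigVertexOf_zero_of_forall hF fun i hi hin => by omega⟩
  obtain ⟨i, hi⟩ := Finite.exists_max fun j => (F (c j)).y1
  have hcross (j : Fin n) (hj : G.Adj (c j) (c i)) : (F (c j)).Crosses (F (c i)) :=
    hF.crosses_of_adj_of_y1_le hj (hi j)
  have hl : G.Adj (c (i - 1)) (c i) := (hc.adj_iff _ _).mpr (.inl (sub_add_cancel i 1).symm)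
  have hr : G.Adj (c (i + 1)) (c i) := (hc.adj_iff _ _).mpr (.inr rfl)
  have hlr : c (i - 1 + 2) ∉ closedNbhd G (c (i - 1 + 0)) :=
    ((hc.add_left (i - 1)).notMem_closedNbhd_zero_iff 2).mpr
      (by simp [Nat.mod_eq_of_lt (show 2 < n by omega)]; omega)
  rw [add_zero, show i - 1 + 2 = i + 1 by grind, notMem_closedNbhd_iff] at hlr
  rcases Box.frame_subset_openRegion_of_crosses (hcross _ hl) (hcross _ hr)
    (hF.frame_inter_frame_eq_empty hlr.1.symm hlr.2) with h | h
  · refine ⟨_, (hc.sub_left (i + 1)).isBigVertexOf_zero hF ?_⟩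
    simpa [show i + 1 - 2 = i - 1 by grind] using h
  · refine ⟨_, (hc.add_left (i - 1)).isBigVertexOf_zero hF ?_⟩
    simpa [show i - 1 + 2 = i + 1 by grind] using h

end IsCycleEnumeration

theorem cycle_lemma_general
    {V : Type} (G : SimpleGraph V) (F : V → Box)
    (hF : IsFrameRepresentation G F) (C : Set V) (hC : IsInducedCycle G C) :
    (∃ v : V, IsBigVertexOf G F C v) ∧
      ∀ u v : V, IsBigVertexOf G F C u → IsBigVertexOf G F C v → u ≠ v → G.Adj u v := by
  refine ⟨?_, fun u v hu hv huv => ?_⟩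
  · obtain ⟨n, hn, e, he⟩ := hC
    have : NeZero n := ⟨by omega⟩
    exact (IsCycleEnumeration.of_equiv e he).exists_isBigVertexOf hF hn
  · by_contra hadj
    exact (hu.2 v hv.1 huv.symm hadj).asymm (hv.2 u hu.1 huv fun h => hadj h.symm)

/-- **Cycle Lemma.** Let `(F v)` be a representation of a restricted
frame graph `G`. Every induced cycle `C` of `G` has a big vertex, i.e. a vertex `v`
of `C` such that `F v` contains the frame of every vertex `u` of `C` with
`u ∉ N[v]`; moreover any two distinct big vertices of `C` are adjacent. -/
theorem cycle_lemma
    {V : Type} [Fintype V] (G : SimpleGraph V) (F : V → Box)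
    (hF : IsFrameRepresentation G F) (C : Set V) (hC : IsInducedCycle G C) :
    (∃ v : V, IsBigVertexOf G F C v) ∧
      ∀ u v : V, IsBigVertexOf G F C u → IsBigVertexOf G F C v → u ≠ v → G.Adj u v :=
  cycle_lemma_general G F hF C hC
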